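/- arXiv:1306.5732 — 2 statements merged into one kernel-verified Lean document; each statement's English description precedes it below -/
import Mathlib

section
/- The homomorphism poset of K_{3,3}, given explicitly by the 19 realizations with crossing numbers (1; 3×7; 5×8; 7×2; 9×1) and the covering relations of its Hasse diagram, is a graded poset with rank function ρ(Ḡ) = ⌊cr(Ḡ)/2⌋. -/
/- The 19 geometric realizations of `K₃,₃`, encoded as `Fin 19`:
`0 = 1.1`, `1–7 = 3.1–3.7`, `8–15 = 5.1–5.8`, `16 = 7.1`, `17 = 7.2`, `18 = 9.1`. -/

/-- Crossing number of each realization. -/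
def crK33 (a : Fin 19) : ℕ :=
  if a.val = 0 then 1 else if a.val ≤ 7 then 3
  else if a.val ≤ 15 then 5 else if a.val ≤ 17 then 7 else 9

/-- The covering pairs of the Hasse diagram of `𝒦₃,₃`. -/
def hasseK33 : List (Fin 19 × Fin 19) :=
  [(0,1),(0,2),(0,3),(0,4),(0,5),(0,6),(0,7),
   (1,8),(1,9),
   (2,8),(2,9),(2,10),(2,11),(2,12),(2,13),
   (3,8),(3,9),(3,10),(3,11),(3,12),(3,13),
   (4,9),(4,10),(4,11),(4,12),(4,13),(4,14),
   (5,10),(5,11),(5,12),(5,14),(5,15),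
   (6,10),(6,11),(6,12),(6,13),(6,14),(6,15),
   (7,14),(7,15),
   (8,16),(9,16),(10,16),(11,16),(12,16),
   (11,17),(12,17),(13,17),(14,17),(15,17),
   (16,18),(17,18)]

/-- The covering relation. -/
def covK33 (a b : Fin 19) : Prop := (a, b) ∈ hasseK33

/-- The order relation: the reflexive transitive closure of the covering relation. -/
def leK33 : Fin 19 → Fin 19 → Prop := Relation.ReflTransGen covK33

/-- `b` covers `a` in the poset. -/
def CoversK33 (a b : Fin 19) : Prop :=
  leK33 a b ∧ a ≠ b ∧ ∀ c, leK33 a c → leK33 c b → c = a ∨ c = b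


set_option maxRecDepth 4000 in
lemma cov_rank : ∀ a b, covK33 a b → crK33 b / 2 = crK33 a / 2 + 1 := by
  have h : ∀ p ∈ hasseK33, crK33 p.2 / 2 = crK33 p.1 / 2 + 1 := by decide
  intro a b hab
  exact h (a, b) hab

lemma le_rank : ∀ a b, leK33 a b → a = b ∨ crK33 a / 2 < crK33 b / 2 := by
  intro a b h
  induction h with
  | refl => exact Or.inl rfl
  | tail _ hc ih =>
    right
    have := cov_rank _ _ hc
    rcases ih with rfl | ih <;> omega

/-- The homomorphism poset of `K₃,₃` is a graded poset with rank function
`ρ(Ḡ) = ⌊cr(Ḡ)/2⌋`: the relation is a partial order, the rank is strictly monotone,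
and the rank increases by exactly 1 across each covering relation. -/
theorem K33_poset_graded :
    (∀ a b, leK33 a b → leK33 b a → a = b) ∧
    (∀ a b, leK33 a b → a ≠ b → crK33 a / 2 < crK33 b / 2) ∧
    (∀ a b, CoversK33 a b → crK33 b / 2 = crK33 a / 2 + 1) := by
  have strict : ∀ a b, leK33 a b → a ≠ b → crK33 a / 2 < crK33 b / 2 := by
    intro a b h hne
    rcases le_rank a b h with rfl | h2
    · exact absurd rfl hne
    · exact h2
  refine ⟨?_, strict, ?_⟩
  · intro a b hab hba
    by_contra hne
    have h1 := strict a b hab hne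
    have h2 := strict b a hba (Ne.symm hne)
    omega
  · rintro a b ⟨hle, hne, hcov⟩
    rcases Relation.ReflTransGen.cases_head hle with rfl | ⟨c, hac, hcb⟩
    · exact absurd rfl hne
    · have hac' : leK33 a c := Relation.ReflTransGen.single hac
      have hr := cov_rank _ _ hac
      rcases hcov c hac' hcb with rfl | rfl
      · omega
      · exact hr
end

section
/- The homomorphism poset of K_{3,3} is not a lattice: the elements 3.1 and 3.2 have two distinct minimal upper bounds, namely 5.1 and 5.2, so their join does not exist. -/
instance (a b : Fin 19) : Decidable (covK33 a b) :=
  inferInstanceAs (Decidable ((a, b) ∈ hasseK33))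

/-- Upward closure table. -/
def upK33 (a : Fin 19) : List (Fin 19) :=
  match a.val with
  | 0 => [0,1,2,3,4,5,6,7,8,9,10,11,12,13,14,15,16,17,18]
  | 1 => [1,8,9,16,18]
  | 2 => [2,8,9,10,11,12,13,16,17,18]
  | 3 => [3,8,9,10,11,12,13,16,17,18]
  | 4 => [4,9,10,11,12,13,14,16,17,18]
  | 5 => [5,10,11,12,14,15,16,17,18]
  | 6 => [6,10,11,12,13,14,15,16,17,18]
  | 7 => [7,14,15,17,18]
  | 8 => [8,16,18]
  | 9 => [9,16,18]
  | 10 => [10,16,18]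
  | 11 => [11,16,17,18]
  | 12 => [12,16,17,18]
  | 13 => [13,17,18]
  | 14 => [14,17,18]
  | 15 => [15,17,18]
  | 16 => [16,18]
  | 17 => [17,18]
  | _ => [18]

lemma up_closed : ∀ a b c : Fin 19, b ∈ upK33 a → covK33 b c → c ∈ upK33 a := by
  decide

lemma le_mem_up {a b : Fin 19} (h : leK33 a b) : b ∈ upK33 a := by
  induction h with
  | refl => revert a; decide
  | tail _ hbc ih => exact up_closed _ _ _ ih hbc

lemma decide_cov : ∀ {a b : Fin 19}, covK33 a b → leK33 a b :=
  fun h => Relation.ReflTransGen.single h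

/-- The homomorphism poset of `K₃,₃` is not a lattice: `5.1` (= index 8) and `5.2`
(= index 9) are two incomparable minimal upper bounds of `{3.1, 3.2}`
(= indices 1, 2), so `3.1 ⊔ 3.2` does not exist. -/
theorem K33_poset_not_lattice :
    (leK33 1 8 ∧ leK33 2 8) ∧ (leK33 1 9 ∧ leK33 2 9) ∧
    (∀ w, leK33 1 w → leK33 2 w → leK33 w 8 → w = 8) ∧
    (∀ w, leK33 1 w → leK33 2 w → leK33 w 9 → w = 9) ∧
    ¬ leK33 8 9 ∧ ¬ leK33 9 8 ∧
    ¬ ∃ z, leK33 1 z ∧ leK33 2 z ∧ ∀ w, leK33 1 w → leK33 2 w → leK33 z w := by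
  have key : ∀ w : Fin 19, w ∈ upK33 1 → w ∈ upK33 2 → (8 : Fin 19) ∈ upK33 w →
      w = 8 := by decide
  have key9 : ∀ w : Fin 19, w ∈ upK33 1 → w ∈ upK33 2 → (9 : Fin 19) ∈ upK33 w →
      w = 9 := by decide
  refine ⟨⟨decide_cov (by decide), decide_cov (by decide)⟩,
    ⟨decide_cov (by decide), decide_cov (by decide)⟩,
    fun w h1 h2 h3 => key w (le_mem_up h1) (le_mem_up h2) (le_mem_up h3),
    fun w h1 h2 h3 => key9 w (le_mem_up h1) (le_mem_up h2) (le_mem_up h3),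
    fun h => by have := le_mem_up h; revert this; decide,
    fun h => by have := le_mem_up h; revert this; decide, ?_⟩
  rintro ⟨z, h1, h2, h3⟩
  have h8 := h3 8 (decide_cov (by decide)) (decide_cov (by decide))
  have h9 := h3 9 (decide_cov (by decide)) (decide_cov (by decide))
  have hz : z = 8 := key z (le_mem_up h1) (le_mem_up h2) (le_mem_up h8)
  subst hz
  have := le_mem_up h9; revert this; decide
end
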